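/- arXiv:1606.04495 — 4 statements merged into one kernel-verified Lean document; each statement's English description precedes it below -/
import Mathlib

section
/- Fix integers t ≤ b and define G_b^t[k] = 1 iff S[k] occurs at least 2^{b−t} times in S[k−2^{b+1}..k+2^{b+1}] and k is the leftmost or rightmost occurrence of S[k] in its block of length 2^{b−1}. If a is a τ-majority of S[i..j], where b = ⌊log₂(j−i+1)⌋ and t = ⌈log₂(1/τ)⌉, then there exists k ∈ [i..j] with S[k] = a and G_b^t[k] = 1. -/
/-!
Since `τ ≥ 2^(-t)`, the majority `a` occurs more than `τ 2^b ≥ 2^(b-t)` times in `S[i..j]`, and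
the window of radius `2^(b+1)` around any position of `[i..j]` contains all of `[i..j]`. So it
suffices to find an occurrence of `a` in `[i..j]` that is extreme in its block. Take the leftmost
and the rightmost occurrence of `a` in the block of some occurrence in `[i..j]`: they are less
than one block length apart, while `[i..j]` is at least one block long, so they cannot both
fall outside `[i..j]`.
-/

/-- Number of occurrences of `a` in `S[i..j]`. -/
def occCount {A : Type*} [DecidableEq A] (S : ℕ → A) (a : A) (i j : ℕ) : ℕ :=
  ((Finset.Icc i j).filter (fun k => S k = a)).card

/-- The flag `G_b^t[k] = 1`: `S[k]` occurs at least `2^(b-t)` times in the window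
`S[k-2^(b+1)..k+2^(b+1)]` (clipped to `[1..n]`), and `k` is the leftmost or rightmost
occurrence of `S[k]` in its block of length `2^(b-1)`. -/
def Gflag {A : Type*} [DecidableEq A] (n : ℕ) (S : ℕ → A) (b t : ℕ) (k : ℕ) : Prop :=
  2 ^ (b - t) ≤ occCount S (S k) (max 1 (k - 2 ^ (b + 1))) (min n (k + 2 ^ (b + 1))) ∧
  (let lo := ((k - 1) / 2 ^ (b - 1)) * 2 ^ (b - 1) + 1
   let hi := min (lo + 2 ^ (b - 1) - 1) n
   (∀ k' ∈ Finset.Icc lo hi, S k' = S k → k ≤ k') ∨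
   (∀ k' ∈ Finset.Icc lo hi, S k' = S k → k' ≤ k))

open Finset

lemma two_pow_sub_lt_of_mul_lt {τ : ℝ} {b t m c : ℕ} (hτ : 0 < τ) (ht : 1 / τ ≤ 2 ^ t)
    (htb : t ≤ b) (hm : 2 ^ b ≤ m) (hc : τ * m < c) : 2 ^ (b - t) < c := by
  have hsplit : (2 : ℝ) ^ (b - t) * 2 ^ t = 2 ^ b := by rw [← pow_add, Nat.sub_add_cancel htb]
  have hτt : (1 : ℝ) ≤ τ * 2 ^ t := by rwa [div_le_iff₀ hτ, mul_comm] at ht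
  have : ((2 ^ (b - t) : ℕ) : ℝ) < c := calc
    ((2 ^ (b - t) : ℕ) : ℝ) = 2 ^ (b - t) := by push_cast; rfl
    _ ≤ 2 ^ (b - t) * (τ * 2 ^ t) := le_mul_of_one_le_right (by positivity) hτt
    _ = τ * 2 ^ b := by rw [← hsplit]; ring
    _ ≤ τ * m := by gcongr; exact_mod_cast hm
    _ < c := hc
  exact_mod_cast this

section Occurrences

variable {A : Type*} [DecidableEq A] (S : ℕ → A)

lemma occCount_mono (a : A) {i j i' j' : ℕ} (hi : i' ≤ i) (hj : j ≤ j') :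
    occCount S a i j ≤ occCount S a i' j' :=
  card_le_card (filter_subset_filter _ (Icc_subset_Icc hi hj))

lemma exists_mem_Icc_of_occCount_pos {a : A} {i j : ℕ} (h : 0 < occCount S a i j) :
    ∃ k ∈ Icc i j, S k = a := by
  obtain ⟨k, hk⟩ := card_pos.1 h
  exact ⟨k, (mem_filter.1 hk).1, (mem_filter.1 hk).2⟩

end Occurrences

section Blocks

/-- Positions are `1`-based, so the blocks of length `L` are `[qL+1 .. (q+1)L]`. -/
def blockStart (L k : ℕ) : ℕ := (k - 1) / L * L + 1

def block (n L k : ℕ) : Finset ℕ := Icc (blockStart L k) (min (blockStart L k + L - 1) n)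

variable {n L k x y : ℕ}

lemma mem_block_iff :
    x ∈ block n L k ↔ blockStart L k ≤ x ∧ x ≤ blockStart L k + L - 1 ∧ x ≤ n := by
  simp only [block, mem_Icc, le_min_iff]

lemma self_mem_block (hL : 0 < L) (hk : 1 ≤ k) (hkn : k ≤ n) : k ∈ block n L k := by
  have hlo : (k - 1) / L * L ≤ k - 1 := Nat.div_mul_le_self _ _
  have hhi : k - 1 < (k - 1) / L * L + L := Nat.lt_div_mul_add hL
  rw [mem_block_iff, blockStart]
  omega

lemma block_eq_of_mem (hx : x ∈ block n L k) : block n L x = block n L k := by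
  rw [mem_block_iff, blockStart] at hx
  have hq : (x - 1) / L = (k - 1) / L :=
    Nat.div_eq_of_lt_le (by omega) (by rw [Nat.add_mul, one_mul]; omega)
  simp only [block, blockStart, hq]

lemma lt_add_of_mem_block (hL : 0 < L) (hx : x ∈ block n L k) (hy : y ∈ block n L k) :
    y < x + L := by
  rw [mem_block_iff] at hx hy
  omega

def IsBlockExtreme {A : Type*} (n : ℕ) (S : ℕ → A) (L k : ℕ) : Prop :=
  (∀ k' ∈ block n L k, S k' = S k → k ≤ k') ∨ (∀ k' ∈ block n L k, S k' = S k → k' ≤ k)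

lemma gflag_iff {A : Type*} [DecidableEq A] (S : ℕ → A) (b t : ℕ) :
    Gflag n S b t k ↔
      2 ^ (b - t) ≤ occCount S (S k) (max 1 (k - 2 ^ (b + 1))) (min n (k + 2 ^ (b + 1))) ∧
      IsBlockExtreme n S (2 ^ (b - 1)) k :=
  Iff.rfl

lemma exists_isBlockExtreme {A : Type*} (S : ℕ → A) {i j k₀ : ℕ} (hL : 0 < L)
    (hLij : L ≤ j - i + 1) (hk₀ : k₀ ∈ Icc i j) (h1i : 1 ≤ i) (hjn : j ≤ n) :
    ∃ k ∈ Icc i j, S k = S k₀ ∧ IsBlockExtreme n S L k := by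
  classical
  rw [mem_Icc] at hk₀
  set occ := (block n L k₀).filter (S · = S k₀)
  have hk₀occ : k₀ ∈ occ := mem_filter.2 ⟨self_mem_block hL (by omega) (by omega), rfl⟩
  have hne : occ.Nonempty := ⟨k₀, hk₀occ⟩
  obtain ⟨hmin, hSmin⟩ := mem_filter.1 (occ.min'_mem hne)
  obtain ⟨hmax, hSmax⟩ := mem_filter.1 (occ.max'_mem hne)
  have hmin_le : occ.min' hne ≤ k₀ := occ.min'_le _ hk₀occ
  have hle_max : k₀ ≤ occ.max' hne := occ.le_max' _ hk₀occ
  by_cases hi : i ≤ occ.min' hne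
  · refine ⟨_, mem_Icc.2 ⟨hi, by omega⟩, hSmin, Or.inl fun k' hk' hSk' => ?_⟩
    rw [block_eq_of_mem hmin] at hk'
    exact occ.min'_le _ (mem_filter.2 ⟨hk', hSk'.trans hSmin⟩)
  by_cases hj : occ.max' hne ≤ j
  · refine ⟨_, mem_Icc.2 ⟨by omega, hj⟩, hSmax, Or.inr fun k' hk' hSk' => ?_⟩
    rw [block_eq_of_mem hmax] at hk'
    exact occ.le_max' _ (mem_filter.2 ⟨hk', hSk'.trans hSmax⟩)
  have := lt_add_of_mem_block hL hmin hmax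
  omega

end Blocks

theorem majority_has_flagged_occurrence_general {A : Type*} [DecidableEq A]
    (n : ℕ) (S : ℕ → A) (τ : ℝ) (hτ0 : 0 < τ)
    (i j : ℕ) (h1i : 1 ≤ i) (hjn : j ≤ n)
    (b t : ℕ) (htb : t ≤ b)
    (hb1 : 2 ^ b ≤ j - i + 1) (hb2 : j - i + 1 ≤ 2 ^ (b + 1))
    (ht : 1 / τ ≤ (2 : ℝ) ^ t)
    (a : A) (hmaj : τ * ((j - i + 1 : ℕ) : ℝ) < (occCount S a i j : ℝ)) :
    ∃ k ∈ Finset.Icc i j, S k = a ∧ Gflag n S b t k := by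
  have hcount : 2 ^ (b - t) < occCount S a i j :=
    two_pow_sub_lt_of_mul_lt hτ0 ht htb hb1 hmaj
  obtain ⟨k₀, hk₀, rfl⟩ := exists_mem_Icc_of_occCount_pos S (pos_of_gt hcount)
  have hLij : 2 ^ (b - 1) ≤ j - i + 1 := (Nat.pow_le_pow_right two_pos (b.sub_le 1)).trans hb1
  obtain ⟨k, hk, hSk, hext⟩ := exists_isBlockExtreme S (by positivity) hLij hk₀ h1i hjn
  refine ⟨k, hk, hSk, (gflag_iff S b t).2 ⟨?_, hext⟩⟩
  rw [mem_Icc] at hk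
  rw [hSk]
  exact hcount.le.trans (occCount_mono S _ (by omega) (by omega))

/-- If `a` is a `τ`-majority of `S[i..j]`, with `b = ⌊log₂(j-i+1)⌋` (so
`2^b ≤ j-i+1 ≤ 2^(b+1)`) and `t = ⌈log₂(1/τ)⌉` (so `1/τ ≤ 2^t`), `t ≤ b`, then some
position `k ∈ [i..j]` has `S[k] = a` and `G_b^t[k] = 1`. -/
theorem majority_has_flagged_occurrence {A : Type*} [DecidableEq A]
    (n : ℕ) (S : ℕ → A) (τ : ℝ) (hτ0 : 0 < τ) (hτ1 : τ ≤ 1)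
    (i j : ℕ) (h1i : 1 ≤ i) (hij : i ≤ j) (hjn : j ≤ n)
    (b t : ℕ) (htb : t ≤ b)
    (hb1 : 2 ^ b ≤ j - i + 1) (hb2 : j - i + 1 ≤ 2 ^ (b + 1))
    (ht : 1 / τ ≤ (2 : ℝ) ^ t)
    (a : A) (hmaj : τ * ((j - i + 1 : ℕ) : ℝ) < (occCount S a i j : ℝ)) :
    ∃ k ∈ Finset.Icc i j, S k = a ∧ Gflag n S b t k :=
  majority_has_flagged_occurrence_general n S τ hτ0 i j h1i hjn b t htb hb1 hb2 ht a hmaj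
end

section
/- Let S be a sequence, c a classification of symbols into classes, S_c the subsequence of S restricted to positions of class c, and for a range [i..j] of S let [i_c..j_c] be the induced range in S_c (i_c = rank_c(K,i−1)+1, j_c = rank_c(K,j), where K[k] is the class of S[k]). Then for any symbol a of class c, a is a τ-majority of S[i..j] if and only if a is a τ_c-majority of S_c[i_c..j_c], where τ_c = τ(j−i+1)/(j_c−i_c+1) (assuming j_c ≥ i_c). -/
/-- Rank of class `c` in `K[1..k]`. -/
def classRank {P : Type*} [DecidableEq P] (K : ℕ → P) (c : P) (k : ℕ) : ℕ :=
  ((Finset.Icc 1 k).filter (fun k' => K k' = c)).card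

/-!
The strictly increasing enumeration `e` of the class-`c` positions is inverse to the rank:
`rank_c(K, e m) = m`. Since the rank increases exactly at class-`c` positions, a class-`c`
position `p` lies in `[i..j]` iff its rank lies in `[i_c..j_c]`; hence `e` maps `[i_c..j_c]`
bijectively onto the class-`c` positions of `[i..j]`, which carry every occurrence of `a`.
The occurrence counts agree, and `τ_c (j_c - i_c + 1) = τ (j - i + 1)` by definition of `τ_c`.
-/

open Finset

section classRank

variable {P : Type*} [DecidableEq P] (K : ℕ → P) (c : P)

theorem classRank_mono : Monotone (classRank K c) := fun _ _ hpq =>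
  card_le_card (filter_subset_filter _ (Icc_subset_Icc_right hpq))

variable {K c}

theorem classRank_add_one_of_eq {p : ℕ} (hp : K (p + 1) = c) :
    classRank K c (p + 1) = classRank K c p + 1 := by
  rw [classRank, ← insert_Icc_right_eq_Icc_add_one (Nat.le_add_left 1 p), filter_insert,
    if_pos hp, card_insert_of_notMem (by simp), classRank]

theorem classRank_le_classRank_iff {p q : ℕ} (hp1 : 1 ≤ p) (hp : K p = c) :
    classRank K c p ≤ classRank K c q ↔ p ≤ q := by
  refine ⟨fun hrank => ?_, fun hpq => classRank_mono K c hpq⟩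
  obtain ⟨p, rfl⟩ := Nat.exists_eq_add_of_le' hp1
  by_contra! hqp
  have := classRank_mono K c (Nat.le_of_lt_succ hqp)
  rw [classRank_add_one_of_eq hp] at hrank
  omega

theorem mem_Icc_iff_classRank_mem_Icc {p : ℕ} (hp1 : 1 ≤ p) (hp : K p = c) (i j : ℕ) :
    p ∈ Icc i j ↔ classRank K c p ∈ Icc (classRank K c (i - 1) + 1) (classRank K c j) := by
  simp only [mem_Icc, Nat.add_one_le_iff, ← not_le, classRank_le_classRank_iff hp1 hp]
  omega

end classRank

section enumeration

variable {P : Type*} [DecidableEq P] {K : ℕ → P} {c : P} {n N : ℕ} {e : ℕ → ℕ}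

theorem classRank_enum {m : ℕ} (hmono : StrictMonoOn e (Set.Icc 1 N))
    (himg : ∀ m ∈ Icc 1 N, e m ∈ Icc 1 n ∧ K (e m) = c)
    (hsurj : ∀ k ∈ Icc 1 n, K k = c → ∃ m ∈ Icc 1 N, e m = k) (hm : m ∈ Icc 1 N) :
    classRank K c (e m) = m := by
  have hIcc : Icc 1 m ⊆ Icc 1 N := Icc_subset_Icc_right (mem_Icc.mp hm).2
  have hmono_le {m'} (hm' : m' ∈ Icc 1 N) : e m' ≤ e m ↔ m' ≤ m :=
    hmono.le_iff_le (by simpa using hm') (by simpa using hm)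
  have hpositions : (Icc 1 (e m)).filter (K · = c) = (Icc 1 m).image e := by
    ext k
    simp only [mem_filter, mem_image]
    constructor
    · rintro ⟨hk, hkc⟩
      have hkn : k ∈ Icc 1 n := by
        have := mem_Icc.mp (himg m hm).1
        simp only [mem_Icc] at hk ⊢
        omega
      obtain ⟨m', hm', rfl⟩ := hsurj k hkn hkc
      exact ⟨m', mem_Icc.mpr ⟨(mem_Icc.mp hm').1, (hmono_le hm').mp (mem_Icc.mp hk).2⟩, rfl⟩
    · rintro ⟨m', hm', rfl⟩
      obtain ⟨hem', hem'c⟩ := himg m' (hIcc hm')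
      exact ⟨mem_Icc.mpr ⟨(mem_Icc.mp hem').1, (hmono_le (hIcc hm')).mpr (mem_Icc.mp hm').2⟩,
        hem'c⟩
  have hinj : Set.InjOn e ↑(Icc 1 N) := by rw [coe_Icc]; exact hmono.injOn
  rw [classRank, hpositions, card_image_of_injOn (hinj.mono (coe_subset.mpr hIcc)), Nat.card_Icc,
    Nat.add_sub_cancel]

theorem image_enum_Icc_classRank {i j : ℕ} (hmono : StrictMonoOn e (Set.Icc 1 N))
    (himg : ∀ m ∈ Icc 1 N, e m ∈ Icc 1 n ∧ K (e m) = c)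
    (hsurj : ∀ k ∈ Icc 1 n, K k = c → ∃ m ∈ Icc 1 N, e m = k) (hN : N = classRank K c n)
    (h1i : 1 ≤ i) (hjn : j ≤ n) :
    (Icc (classRank K c (i - 1) + 1) (classRank K c j)).image e = (Icc i j).filter (K · = c) := by
  ext k
  simp only [mem_filter, mem_image]
  constructor
  · rintro ⟨m, hm, rfl⟩
    have hmN : m ∈ Icc 1 N := by
      have := classRank_mono K c hjn
      simp only [mem_Icc] at hm ⊢
      omega
    obtain ⟨hem, hemc⟩ := himg m hmN
    rw [mem_Icc_iff_classRank_mem_Icc (mem_Icc.mp hem).1 hemc, classRank_enum hmono himg hsurj hmN]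
    exact ⟨hm, hemc⟩
  · rintro ⟨hk, hkc⟩
    have hkn : k ∈ Icc 1 n := by
      simp only [mem_Icc] at hk ⊢
      omega
    obtain ⟨m, hmN, rfl⟩ := hsurj k hkn hkc
    rw [mem_Icc_iff_classRank_mem_Icc (mem_Icc.mp hkn).1 hkc,
      classRank_enum hmono himg hsurj hmN] at hk
    exact ⟨m, hk, rfl⟩

theorem occCount_enum_eq_occCount {A : Type*} [DecidableEq A] {S Sc : ℕ → A} {a : A} {i j : ℕ}
    (hmono : StrictMonoOn e (Set.Icc 1 N))
    (himg : ∀ m ∈ Icc 1 N, e m ∈ Icc 1 n ∧ K (e m) = c)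
    (hsurj : ∀ k ∈ Icc 1 n, K k = c → ∃ m ∈ Icc 1 N, e m = k) (hN : N = classRank K c n)
    (hSc : ∀ m ∈ Icc 1 N, Sc m = S (e m)) (ha : ∀ k, S k = a → K k = c)
    (h1i : 1 ≤ i) (hjn : j ≤ n) :
    occCount Sc a (classRank K c (i - 1) + 1) (classRank K c j) = occCount S a i j := by
  set I := Icc (classRank K c (i - 1) + 1) (classRank K c j)
  have hIN : I ⊆ Icc 1 N := Icc_subset_Icc (Nat.le_add_left 1 _) (hN ▸ classRank_mono K c hjn)
  have hinj : Set.InjOn e ↑(Icc 1 N) := by rw [coe_Icc]; exact hmono.injOn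
  calc (I.filter (Sc · = a)).card
      = (I.filter (fun m => S (e m) = a)).card := by
        rw [filter_congr fun m hm => by rw [hSc m (hIN hm)]]
    _ = ((I.filter (fun m => S (e m) = a)).image e).card :=
        (card_image_of_injOn (hinj.mono (coe_subset.mpr ((filter_subset _ I).trans hIN)))).symm
    _ = (((Icc i j).filter (K · = c)).filter (S · = a)).card := by
        rw [← image_enum_Icc_classRank hmono himg hsurj hN h1i hjn, filter_image]
    _ = ((Icc i j).filter (S · = a)).card := by
        rw [filter_filter, filter_congr fun k _ => and_iff_right_of_imp (ha k)]

end enumeration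

theorem majority_in_class_subsequence_general {A P : Type*} [DecidableEq A] [DecidableEq P]
    (n : ℕ) (S : ℕ → A) (cl : A → P) (K : ℕ → P) (hK : ∀ k, K k = cl (S k))
    (c : P) (N : ℕ) (hN : N = ((Finset.Icc 1 n).filter (fun k => cl (S k) = c)).card)
    (e : ℕ → ℕ) (hmono : StrictMonoOn e (Set.Icc 1 N))
    (himg : ∀ m ∈ Finset.Icc 1 N, e m ∈ Finset.Icc 1 n ∧ cl (S (e m)) = c)
    (hsurj : ∀ k ∈ Finset.Icc 1 n, cl (S k) = c → ∃ m ∈ Finset.Icc 1 N, e m = k)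
    (Sc : ℕ → A) (hSc : ∀ m ∈ Finset.Icc 1 N, Sc m = S (e m))
    (i j : ℕ) (h1i : 1 ≤ i) (hjn : j ≤ n)
    (ic jc : ℕ) (hic : ic = classRank K c (i - 1) + 1) (hjc : jc = classRank K c j)
    (τ : ℝ)
    (τc : ℝ) (hτc : τc = τ * ((j - i + 1 : ℕ) : ℝ) / ((jc - ic + 1 : ℕ) : ℝ))
    (a : A) (ha : cl a = c) :
    (τ * ((j - i + 1 : ℕ) : ℝ) < (occCount S a i j : ℝ)) ↔
    (τc * ((jc - ic + 1 : ℕ) : ℝ) < (occCount Sc a ic jc : ℝ)) := by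
  obtain rfl : K = fun k => cl (S k) := funext hK
  have hocc : occCount Sc a ic jc = occCount S a i j := by
    subst hic hjc
    exact occCount_enum_eq_occCount hmono himg hsurj hN hSc (fun k hk => hk ▸ ha) h1i hjn
  have hlen : ((jc - ic + 1 : ℕ) : ℝ) ≠ 0 := by positivity
  rw [hτc, div_mul_cancel₀ _ hlen, hocc]

/-- Let `cl` classify symbols, `K[k] = cl(S[k])`, and let `Sc` be the subsequence of `S`
(of length `N`) at the positions of class `c`, enumerated in increasing order by `e`.
For a range `[i..j]` of `S`, let `i_c = rank_c(K,i-1)+1` and `j_c = rank_c(K,j)` be the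
induced range in `Sc`. Then for any symbol `a` of class `c`, `a` is a `τ`-majority of
`S[i..j]` iff `a` is a `τ_c`-majority of `Sc[i_c..j_c]`,
where `τ_c = τ(j-i+1)/(j_c-i_c+1)`. -/
theorem majority_in_class_subsequence {A P : Type*} [DecidableEq A] [DecidableEq P]
    (n : ℕ) (S : ℕ → A) (cl : A → P) (K : ℕ → P) (hK : ∀ k, K k = cl (S k))
    (c : P) (N : ℕ) (hN : N = ((Finset.Icc 1 n).filter (fun k => cl (S k) = c)).card)
    (e : ℕ → ℕ) (hmono : StrictMonoOn e (Set.Icc 1 N))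
    (himg : ∀ m ∈ Finset.Icc 1 N, e m ∈ Finset.Icc 1 n ∧ cl (S (e m)) = c)
    (hsurj : ∀ k ∈ Finset.Icc 1 n, cl (S k) = c → ∃ m ∈ Finset.Icc 1 N, e m = k)
    (Sc : ℕ → A) (hSc : ∀ m ∈ Finset.Icc 1 N, Sc m = S (e m))
    (i j : ℕ) (h1i : 1 ≤ i) (hij : i ≤ j) (hjn : j ≤ n)
    (ic jc : ℕ) (hic : ic = classRank K c (i - 1) + 1) (hjc : jc = classRank K c j)
    (hicjc : ic ≤ jc)
    (τ : ℝ) (hτ0 : 0 < τ) (hτ1 : τ ≤ 1)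
    (τc : ℝ) (hτc : τc = τ * ((j - i + 1 : ℕ) : ℝ) / ((jc - ic + 1 : ℕ) : ℝ))
    (a : A) (ha : cl a = c) :
    (τ * ((j - i + 1 : ℕ) : ℝ) < (occCount S a i j : ℝ)) ↔
    (τc * ((jc - ic + 1 : ℕ) : ℝ) < (occCount Sc a ic jc : ℝ)) :=
  majority_in_class_subsequence_general n S cl K hK c N hN e hmono himg hsurj Sc hSc i j h1i hjn ic
    jc hic hjc τ τc hτc a ha
end

section
/- Consider the recursive procedure that, given a range of blocks of the array C (previous-occurrence array of S) with block minima stored in C', finds the position k' of the minimum block, finds within that block the position k of the minimum of C, and (if C[k] < i) recurses on the left sub-interval, reports S[k] and all new elements of block k', then recurses on the right sub-interval, stopping a branch when C[k] ≥ i for all k in the minimum block. This procedure reports exactly the leftmost positions in S[i..j] of all distinct elements of the block-aligned range S[i..j], and examines at most g(n) cells of C per distinct element discovered, where g(n) is the block length. -/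
/-- Minimum of `C` over block `p` (blocks of length `g`, block `p` covering
positions `(p-1)·g+1 .. p·g`). -/
noncomputable def blockMin (C : ℕ → ℕ) (g p : ℕ) : ℕ :=
  sInf (C '' Set.Icc ((p - 1) * g + 1) (p * g))

open Classical in
/-- The recursive sparsified procedure of Muthukrishnan's algorithm, on the range of
blocks `p..q`.  It finds a block `p*` whose block-minimum (stored in `C'`) is smallest,
and: if all cells `k` of that block have `C[k] ≥ i` it stops, reporting nothing and
scanning that block; otherwise it recurses on the blocks to the left of `p*`, reports
the cells `k` of block `p*` with `C[k] < i` (the leftmost occurrences found in that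
block), and recurses on the blocks to the right of `p*`.  The second component counts
the number of cells of `C` examined. -/
noncomputable def sparseProc (C : ℕ → ℕ) (g i : ℕ) : ℕ → ℕ → ℕ → Finset ℕ × ℕ
  | 0, _, _ => (∅, 0)
  | fuel + 1, p, q =>
    if hpq : p ≤ q then
      have hF : (Finset.Icc p q).Nonempty := ⟨p, by simp [hpq]⟩
      let pstar := ((Finset.Icc p q).exists_min_image (blockMin C g) hF).choose
      let blk := Finset.Icc ((pstar - 1) * g + 1) (pstar * g)
      if ∀ k ∈ blk, i ≤ C k then (∅, blk.card)
      else
        let L := sparseProc C g i fuel p (pstar - 1)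
        let R := sparseProc C g i fuel (pstar + 1) q
        (L.1 ∪ blk.filter (fun k => C k < i) ∪ R.1, L.2 + blk.card + R.2)
    else (∅, 0)

/-!
`C k < i` says exactly that position `k` is the leftmost occurrence of `S k` in `S[i..]`, so the
procedure has to report the cells of the range with `C < i`. A call either finds such a cell in
its block `r` of least minimum, and the range splits into the blocks left of `r`, block `r`
and the blocks right of `r`; or that least minimum is `≥ i`, and then no cell of the whole range
qualifies. Every call scans at most one block (`g` cells). The calls form a binary tree whose
internal nodes each report a cell, so there are at most `#reported` internal nodes and one more
leaf, giving the cost bound `g · (2 · #reported + 1)`.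
-/

def blocks (g p q : ℕ) : Finset ℕ := Finset.Icc ((p - 1) * g + 1) (q * g)

section Blocks

variable {g p q r : ℕ}

theorem blocks_eq_empty (h : q < p) : blocks g p q = ∅ :=
  Finset.Icc_eq_empty (by have := Nat.mul_le_mul_right g (Nat.le_sub_one_of_lt h); omega)

theorem blocks_self_nonempty (hg : 0 < g) (hp : 1 ≤ p) : (blocks g p p).Nonempty :=
  Finset.nonempty_Icc.mpr <| by
    have := Nat.sub_one_mul p g
    have := Nat.le_mul_of_pos_left g hp
    omega

theorem card_blocks_self_le : (blocks g p p).card ≤ g := by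
  rw [blocks, Nat.card_Icc, Nat.sub_one_mul]
  omega

theorem disjoint_blocks {p' q' : ℕ} (h : q < p') : Disjoint (blocks g p q) (blocks g p' q') := by
  have := Nat.mul_le_mul_right g (Nat.le_sub_one_of_lt h)
  simp only [blocks, Finset.disjoint_left, Finset.mem_Icc]
  omega

theorem blocks_eq_union (hpr : p ≤ r) (hrq : r ≤ q) :
    blocks g p q = blocks g p (r - 1) ∪ blocks g r r ∪ blocks g (r + 1) q := by
  have := Nat.mul_le_mul_right g (Nat.sub_le_sub_right hpr 1)
  have := Nat.mul_le_mul_right g (Nat.sub_le r 1)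
  have := Nat.mul_le_mul_right g hrq
  ext k
  simp only [blocks, Finset.mem_union, Finset.mem_Icc, Nat.add_sub_cancel]
  omega

theorem exists_mem_blocks_self (hg : 0 < g) {k : ℕ} (hk : k ∈ blocks g p q) :
    ∃ s ∈ Finset.Icc p q, k ∈ blocks g s s := by
  simp only [blocks, Finset.mem_Icc] at hk ⊢
  refine ⟨(k - 1) / g + 1, ⟨?_, ?_⟩, ?_, ?_⟩
  · have : p - 1 ≤ (k - 1) / g := (Nat.le_div_iff_mul_le hg).mpr (by omega)
    omega
  · have : (k - 1) / g < q := (Nat.div_lt_iff_lt_mul hg).mpr (by omega)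
    omega
  · have := Nat.div_mul_le_self (k - 1) g
    simp only [Nat.add_sub_cancel]
    omega
  · have := Nat.div_add_mod' (k - 1) g
    have := Nat.mod_lt (k - 1) hg
    rw [Nat.add_mul, one_mul]
    omega

end Blocks

section BlockMin

variable {C : ℕ → ℕ} {g p : ℕ}

theorem blockMin_eq_sInf : blockMin C g p = sInf (C '' blocks g p p) := by
  rw [blockMin, blocks, Finset.coe_Icc]

theorem blockMin_le {k : ℕ} (hk : k ∈ blocks g p p) : blockMin C g p ≤ C k :=
  blockMin_eq_sInf ▸ Nat.sInf_le ⟨k, hk, rfl⟩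

theorem le_blockMin {i : ℕ} (hne : (blocks g p p).Nonempty) (h : ∀ k ∈ blocks g p p, i ≤ C k) :
    i ≤ blockMin C g p :=
  blockMin_eq_sInf ▸ le_csInf ((Finset.coe_nonempty.mpr hne).image C)
    (by rintro _ ⟨k, hk, rfl⟩; exact h k hk)

end BlockMin

section SparseProc

variable {C : ℕ → ℕ} {g i : ℕ}

open Classical

theorem sparseProc_eq_empty_of_lt {fuel p q : ℕ} (h : q < p) :
    sparseProc C g i fuel p q = (∅, 0) := by
  cases fuel <;> rw [sparseProc]
  rw [dif_neg (by omega)]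

theorem sparseProc_succ_of_le {fuel p q : ℕ} (hpq : p ≤ q) :
    ∃ r ∈ Finset.Icc p q, (∀ s ∈ Finset.Icc p q, blockMin C g r ≤ blockMin C g s) ∧
      sparseProc C g i (fuel + 1) p q =
        if ∀ k ∈ blocks g r r, i ≤ C k then (∅, (blocks g r r).card)
        else ((sparseProc C g i fuel p (r - 1)).1 ∪ {k ∈ blocks g r r | C k < i} ∪
            (sparseProc C g i fuel (r + 1) q).1,
          (sparseProc C g i fuel p (r - 1)).2 + (blocks g r r).card +
            (sparseProc C g i fuel (r + 1) q).2) := by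
  have hF : (Finset.Icc p q).Nonempty := ⟨p, Finset.mem_Icc.mpr ⟨le_rfl, hpq⟩⟩
  obtain ⟨hr, hmin⟩ := ((Finset.Icc p q).exists_min_image (blockMin C g) hF).choose_spec
  exact ⟨_, hr, hmin, by rw [sparseProc, dif_pos hpq]; rfl⟩

theorem sparseProc_fst_eq_filter (hg : 0 < g) {fuel p q : ℕ} (hp : 1 ≤ p)
    (hfuel : q < p + fuel) :
    (sparseProc C g i fuel p q).1 = {k ∈ blocks g p q | C k < i} := by
  induction fuel generalizing p q with
  | zero => rw [sparseProc_eq_empty_of_lt (by omega), blocks_eq_empty (by omega)]; rfl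
  | succ fuel ih =>
    rcases lt_or_ge q p with hqp | hpq
    · rw [sparseProc_eq_empty_of_lt hqp, blocks_eq_empty hqp]; rfl
    obtain ⟨r, hr, hmin, heq⟩ := sparseProc_succ_of_le (C := C) (i := i) (fuel := fuel) hpq
    rw [Finset.mem_Icc] at hr
    rw [heq]
    split_ifs with hstop
    · -- `r` has the least block minimum, so `C ≥ i` on every block of the range.
      refine (Finset.filter_false_of_mem fun k hk => ?_).symm
      obtain ⟨s, hs, hks⟩ := exists_mem_blocks_self hg hk
      have := le_blockMin (blocks_self_nonempty hg (by omega)) hstop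
      have := hmin s hs
      have := blockMin_le (C := C) hks
      omega
    · rw [ih hp (by omega), ih (by omega) (by omega), blocks_eq_union hr.1 hr.2,
        Finset.filter_union, Finset.filter_union]

theorem sparseProc_snd_le (hg : 0 < g) {fuel p q : ℕ} (hp : 1 ≤ p) (hfuel : q < p + fuel) :
    (sparseProc C g i fuel p q).2 ≤ g * (2 * (sparseProc C g i fuel p q).1.card + 1) := by
  induction fuel generalizing p q with
  | zero => rw [sparseProc_eq_empty_of_lt (by omega)]; exact Nat.zero_le _
  | succ fuel ih =>
    rcases lt_or_ge q p with hqp | hpq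
    · rw [sparseProc_eq_empty_of_lt hqp]; exact Nat.zero_le _
    obtain ⟨r, hr, -, heq⟩ := sparseProc_succ_of_le (C := C) (i := i) (fuel := fuel) hpq
    rw [Finset.mem_Icc] at hr
    rw [heq]
    split_ifs with hstop
    · simpa using card_blocks_self_le
    obtain ⟨k, hk, hki⟩ := not_forall₂.mp hstop
    have hL := ih hp (by omega : r - 1 < p + fuel)
    have hR := ih (by omega : 1 ≤ r + 1) (by omega : q < r + 1 + fuel)
    have hLM : Disjoint (sparseProc C g i fuel p (r - 1)).1 {k ∈ blocks g r r | C k < i} := by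
      rw [sparseProc_fst_eq_filter hg hp (by omega)]
      exact (disjoint_blocks (by omega)).mono (Finset.filter_subset _ _) (Finset.filter_subset _ _)
    have hMR : Disjoint ((sparseProc C g i fuel p (r - 1)).1 ∪ {k ∈ blocks g r r | C k < i})
        (sparseProc C g i fuel (r + 1) q).1 := by
      rw [sparseProc_fst_eq_filter hg hp (by omega),
        sparseProc_fst_eq_filter hg (by omega) (by omega),
        ← Finset.filter_union]
      refine (Finset.disjoint_union_left.mpr ⟨disjoint_blocks ?_, disjoint_blocks ?_⟩).mono
        (Finset.filter_subset _ _) (Finset.filter_subset _ _) <;> omega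
    have hM : 1 ≤ {k ∈ blocks g r r | C k < i}.card :=
      Finset.card_pos.mpr ⟨k, Finset.mem_filter.mpr ⟨hk, not_le.mp hki⟩⟩
    rw [Finset.card_union_of_disjoint hMR, Finset.card_union_of_disjoint hLM]
    -- the scanned block costs at most `g`, paid for by its at least one reported cell
    nlinarith [Nat.mul_le_mul_left g hM, card_blocks_self_le (g := g) (p := r)]

end SparseProc

def IsPrevOcc {A : Type*} (S : ℕ → A) (k c : ℕ) : Prop :=
  (c = 0 ∧ ∀ k', 1 ≤ k' → k' < k → S k' ≠ S k) ∨
    (1 ≤ c ∧ c < k ∧ S c = S k ∧ ∀ k', c < k' → k' < k → S k' ≠ S k)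

theorem IsPrevOcc.lt_iff {A : Type*} {S : ℕ → A} {k c i : ℕ} (h : IsPrevOcc S k c)
    (hi : 1 ≤ i) : c < i ↔ ∀ k', i ≤ k' → k' < k → S k' ≠ S k := by
  rcases h with ⟨hc, hnone⟩ | ⟨-, hck, hSc, hbetween⟩
  · exact ⟨fun _ k' hk' => hnone k' (by omega), fun _ => by omega⟩
  · refine ⟨fun hci k' hk' => hbetween k' (by omega), fun hleft => ?_⟩
    by_contra! hic
    exact hleft c hic hck hSc

open Classical in
theorem sparseProc_correct_general {A : Type*} (n : ℕ) (S : ℕ → A) (C : ℕ → ℕ)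
    (hC : ∀ k, 1 ≤ k → k ≤ n →
      ((C k = 0 ∧ ∀ k', 1 ≤ k' → k' < k → S k' ≠ S k) ∨
       (1 ≤ C k ∧ C k < k ∧ S (C k) = S k ∧ ∀ k', C k < k' → k' < k → S k' ≠ S k)))
    (g : ℕ) (hg : 1 ≤ g) (pi pj : ℕ) (hpi : 1 ≤ pi)
    (i j : ℕ) (hi : i = (pi - 1) * g + 1) (hj : j = pj * g) (hjn : j ≤ n) :
    (sparseProc C g i (pj - pi + 1) pi pj).1
        = (Finset.Icc i j).filter (fun k => ∀ k', i ≤ k' → k' < k → S k' ≠ S k) ∧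
    (sparseProc C g i (pj - pi + 1) pi pj).2
        ≤ 4 * g * ((sparseProc C g i (pj - pi + 1) pi pj).1.card + 1) := by
  have hfuel : pj < pi + (pj - pi + 1) := by omega
  have hrange : blocks g pi pj = Finset.Icc i j := by rw [hi, hj, blocks]
  have hleftmost : {k ∈ Finset.Icc i j | C k < i}
      = (Finset.Icc i j).filter (fun k => ∀ k', i ≤ k' → k' < k → S k' ≠ S k) :=
    Finset.filter_congr fun k hk => by
      rw [Finset.mem_Icc] at hk
      exact IsPrevOcc.lt_iff (hC k (by omega) (by omega)) (by omega)
  refine ⟨by rw [sparseProc_fst_eq_filter hg hpi hfuel, hrange, hleftmost], ?_⟩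
  calc (sparseProc C g i (pj - pi + 1) pi pj).2
      ≤ g * (2 * (sparseProc C g i (pj - pi + 1) pi pj).1.card + 1) :=
        sparseProc_snd_le hg hpi hfuel
    _ ≤ 4 * g * ((sparseProc C g i (pj - pi + 1) pi pj).1.card + 1) := by ring_nf; omega

open Classical in
/-- On a block-aligned interval `S[i..j]` (`i = (p_i-1)·g+1`, `j = p_j·g`), the
sparsified procedure reports exactly the leftmost positions in `S[i..j]` of all the
distinct elements of `S[i..j]`, and it examines `O(g)` cells of `C` per new element
discovered: its total work is at most `4·g·(number of reported elements + 1)`. -/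
theorem sparseProc_correct {A : Type*} (n : ℕ) (S : ℕ → A) (C : ℕ → ℕ)
    (hC : ∀ k, 1 ≤ k → k ≤ n →
      ((C k = 0 ∧ ∀ k', 1 ≤ k' → k' < k → S k' ≠ S k) ∨
       (1 ≤ C k ∧ C k < k ∧ S (C k) = S k ∧ ∀ k', C k < k' → k' < k → S k' ≠ S k)))
    (g : ℕ) (hg : 1 ≤ g) (pi pj : ℕ) (hpi : 1 ≤ pi) (hpipj : pi ≤ pj)
    (i j : ℕ) (hi : i = (pi - 1) * g + 1) (hj : j = pj * g) (hjn : j ≤ n) :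
    (sparseProc C g i (pj - pi + 1) pi pj).1
        = (Finset.Icc i j).filter (fun k => ∀ k', i ≤ k' → k' < k → S k' ≠ S k) ∧
    (sparseProc C g i (pj - pi + 1) pi pj).2
        ≤ 4 * g * ((sparseProc C g i (pj - pi + 1) pi pj).1.card + 1) :=
  sparseProc_correct_general n S C hC g hg pi pj hpi i j hi hj hjn
end

section
/- If all positions k within the block of C containing the minimum of C[ℓ..r] satisfy C[k] ≥ i (where [ℓ..r] ⊆ [i..j] is block-aligned and all elements of S[i..ℓ−1] with C-value < i have been reported), then every element occurring in S[ℓ..r] already occurs in S[i..ℓ−1]. -/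
/-!
Every position `k` of `S[ℓ..r]` has its previous occurrence `C[k] ≥ i`. If `C[k] < ℓ` this is
the required earlier occurrence; otherwise `C[k]` is a smaller position of `S[ℓ..r]` carrying the
same element, and we conclude by strong induction on `k`.
-/

open Finset

theorem exists_mem_Ico_eq_of_prev_ge {A : Type*} {S : ℕ → A} {C : ℕ → ℕ} {i ℓ r : ℕ}
    (hprev : ∀ k ∈ Icc ℓ r, C k < k ∧ S (C k) = S k) (hge : ∀ k ∈ Icc ℓ r, i ≤ C k) :
    ∀ k ∈ Icc ℓ r, ∃ k' ∈ Ico i ℓ, S k' = S k := by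
  intro k
  induction k using Nat.strong_induction_on with
  | _ k ih =>
    intro hk
    obtain ⟨hlt, heq⟩ := hprev k hk
    have hik := hge k hk
    by_cases hCℓ : C k < ℓ
    · exact ⟨C k, mem_Ico.mpr ⟨hik, hCℓ⟩, heq⟩
    · have hmem : C k ∈ Icc ℓ r := mem_Icc.mpr ⟨not_lt.mp hCℓ, hlt.le.trans (mem_Icc.mp hk).2⟩
      obtain ⟨k', hk', hS⟩ := ih (C k) hlt hmem
      exact ⟨k', hk', hS.trans heq⟩

theorem stop_condition_sound_general {A : Type*} (n : ℕ) (S : ℕ → A) (C : ℕ → ℕ)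
    (hC : ∀ k, 1 ≤ k → k ≤ n →
      ((C k = 0 ∧ ∀ k', 1 ≤ k' → k' < k → S k' ≠ S k) ∨
       (1 ≤ C k ∧ C k < k ∧ S (C k) = S k ∧ ∀ k', C k < k' → k' < k → S k' ≠ S k)))
    (g : ℕ)
    (i j ℓ r : ℕ) (h1i : 1 ≤ i) (hiℓ : i ≤ ℓ) (hrj : r ≤ j) (hjn : j ≤ n)
    (kmin : ℕ)
    (hmin : ∀ k ∈ Finset.Icc ℓ r, C kmin ≤ C k)
    (p : ℕ) (hkblk : kmin ∈ Finset.Icc ((p - 1) * g + 1) (p * g))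
    (hblk : ∀ k ∈ Finset.Icc ((p - 1) * g + 1) (p * g), i ≤ C k) :
    ∀ k ∈ Finset.Icc ℓ r, ∃ k', i ≤ k' ∧ k' ≤ ℓ - 1 ∧ S k' = S k := by
  have hge : ∀ k ∈ Icc ℓ r, i ≤ C k := fun k hk => (hblk kmin hkblk).trans (hmin k hk)
  have hprev : ∀ k ∈ Icc ℓ r, C k < k ∧ S (C k) = S k := by
    intro k hk
    obtain ⟨hℓk, hkr⟩ := mem_Icc.mp hk
    rcases hC k (by omega) (by omega) with ⟨hzero, -⟩ | ⟨-, hlt, heq, -⟩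
    · have hik := hge k hk
      omega
    · exact ⟨hlt, heq⟩
  intro k hk
  obtain ⟨k', hk', hS⟩ := exists_mem_Ico_eq_of_prev_ge hprev hge k hk
  obtain ⟨hik', hk'ℓ⟩ := mem_Ico.mp hk'
  exact ⟨k', hik', by omega, hS⟩

/-- Suppose `[ℓ..r] ⊆ [i..j]` is a block-aligned subinterval (blocks of length `g`),
`kmin` is a position of the minimum of `C` over `[ℓ..r]`, lying in block `p`, and all
positions `k` of block `p` satisfy `C[k] ≥ i`.  Then every element occurring in
`S[ℓ..r]` already occurs in `S[i..ℓ-1]`. -/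
theorem stop_condition_sound {A : Type*} (n : ℕ) (S : ℕ → A) (C : ℕ → ℕ)
    (hC : ∀ k, 1 ≤ k → k ≤ n →
      ((C k = 0 ∧ ∀ k', 1 ≤ k' → k' < k → S k' ≠ S k) ∨
       (1 ≤ C k ∧ C k < k ∧ S (C k) = S k ∧ ∀ k', C k < k' → k' < k → S k' ≠ S k)))
    (g : ℕ) (hg : 1 ≤ g)
    (i j ℓ r : ℕ) (h1i : 1 ≤ i) (hiℓ : i ≤ ℓ) (hℓr : ℓ ≤ r) (hrj : r ≤ j) (hjn : j ≤ n)
    (pℓ pr : ℕ) (hℓ : ℓ = (pℓ - 1) * g + 1) (hr : r = pr * g)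
    (kmin : ℕ) (hkmin : kmin ∈ Finset.Icc ℓ r)
    (hmin : ∀ k ∈ Finset.Icc ℓ r, C kmin ≤ C k)
    (p : ℕ) (hkblk : kmin ∈ Finset.Icc ((p - 1) * g + 1) (p * g))
    (hblk : ∀ k ∈ Finset.Icc ((p - 1) * g + 1) (p * g), i ≤ C k) :
    ∀ k ∈ Finset.Icc ℓ r, ∃ k', i ≤ k' ∧ k' ≤ ℓ - 1 ∧ S k' = S k :=
  stop_condition_sound_general n S C hC g i j ℓ r h1i hiℓ hrj hjn kmin hmin p hkblk hblk
end
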